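/- With the notation A₁⋯Aₙ = (pₙ qₙ; rₙ sₙ), each Aₙ = (aₙ bₙ; cₙ dₙ) a 2×2 nonnegative matrix with positive determinant, p₁, q₁ > 0, and wₙ = qₙ/pₙ, |Iₙ| = sₙ/qₙ − rₙ/pₙ: the limit limₙ |Iₙ| is positive if and only if the three series ∑ₙ (cₙ/aₙ)wₙ₋₁, ∑ₙ (bₙ/dₙ)(wₙ₋₁)⁻¹, and ∑ₙ (cₙ/aₙ)(bₙ/dₙ) all converge. -/

import Mathlib

open Matrix Filter Topology

/-!
Writing `wₙ₋₁ = qₙ₋₁/pₙ₋₁`, the first-row update `(pₙ, qₙ) = (pₙ₋₁, qₙ₋₁) Aₙ` together with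
`|Iₙ| = det(A₁⋯Aₙ)/(pₙqₙ)` gives `|Iₙ| = |Iₙ₋₁| (1 - zₙ) / ((1 + xₙ)(1 + yₙ))`, where `xₙ, yₙ, zₙ`
are the terms of the three series. Since `(1 + x)(1 + y)/(1 - z) ≥ 1 + x + y + z`, the partial
sums of `∑ (xₙ + yₙ + zₙ)` are bounded by `|I₁|/L` once `|Iₙ|` decreases to `L > 0`; conversely,
if the three series converge, so does `∑ log ((1 - zₙ)/((1 + xₙ)(1 + yₙ)))`, and `|Iₙ|` tends to
`|I₁|` times the exponential of its sum.
-/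

section Contraction

variable {F t : ℕ → ℝ}

lemma eq_mul_prod_range_of_succ_eq_mul (hF : ∀ n, F (n + 1) = F n * t n) (n : ℕ) :
    F n = F 0 * ∏ j ∈ Finset.range n, t j := by
  induction n with
  | zero => simp
  | succ n ih => rw [hF, ih, Finset.prod_range_succ, mul_assoc]

lemma exists_pos_tendsto_of_succ_eq_mul (hF : ∀ n, F (n + 1) = F n * t n) (hF0 : 0 < F 0)
    (ht : ∀ n, 0 < t n) (hlog : Summable fun n => Real.log (t n)) :
    ∃ L, 0 < L ∧ Tendsto F atTop (𝓝 L) := by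
  refine ⟨F 0 * Real.exp (∑' n, Real.log (t n)), by positivity, ?_⟩
  exact ((Real.hasProd_of_hasSum_log ht hlog.hasSum).tendsto_prod_nat.const_mul _).congr
    fun n => (eq_mul_prod_range_of_succ_eq_mul hF n).symm

lemma summable_of_succ_eq_mul_of_tendsto_pos {s : ℕ → ℝ} (hF : ∀ n, F (n + 1) = F n * t n)
    (hF0 : 0 ≤ F 0) (ht : ∀ n, 0 ≤ t n) (hs : ∀ n, 0 ≤ s n) (hts : ∀ n, t n * (1 + s n) ≤ 1)
    {L : ℝ} (hL : 0 < L) (hlim : Tendsto F atTop (𝓝 L)) : Summable s := by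
  have ht1 (n : ℕ) : t n ≤ 1 := by nlinarith [ht n, hs n, hts n]
  have hS (n : ℕ) : 0 ≤ ∑ j ∈ Finset.range n, s j := Finset.sum_nonneg fun j _ => hs j
  have hF_nonneg (n : ℕ) : 0 ≤ F n := by
    induction n with
    | zero => exact hF0
    | succ n ih => rw [hF]; exact mul_nonneg ih (ht n)
  have hF_anti : Antitone F := antitone_nat_of_succ_le fun n => by
    rw [hF]; exact mul_le_of_le_one_right (hF_nonneg n) (ht1 n)
  -- `F n (1 + ∑_{j<n} s j)` does not increase, since `t (1 + s + S) ≤ 1 + S` for `S ≥ 0`.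
  have hbound (n : ℕ) : F n * (1 + ∑ j ∈ Finset.range n, s j) ≤ F 0 := by
    induction n with
    | zero => simp
    | succ n ih =>
      rw [hF, Finset.sum_range_succ]
      calc F n * t n * (1 + (∑ j ∈ Finset.range n, s j + s n))
          = F n * (t n * (1 + s n) + t n * ∑ j ∈ Finset.range n, s j) := by ring
        _ ≤ F n * (1 + ∑ j ∈ Finset.range n, s j) :=
          mul_le_mul_of_nonneg_left (add_le_add (hts n) (mul_le_of_le_one_left (hS n) (ht1 n)))
            (hF_nonneg n)
        _ ≤ F 0 := ih
  refine summable_of_sum_range_le (c := F 0 / L) hs fun n => ?_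
  rw [le_div_iff₀ hL]
  nlinarith [hF_anti.le_of_tendsto hlim n, hbound n, hS n]

end Contraction

/-- The paper's `αₙβₙγₙ`, for `x = (cₙ/aₙ)wₙ₋₁`, `y = (bₙ/dₙ)wₙ₋₁⁻¹`, `z = (cₙ/aₙ)(bₙ/dₙ)`. -/
noncomputable def contractionFactor (x y z : ℝ) : ℝ := (1 - z) / ((1 + x) * (1 + y))

section ContractionFactor

variable {x y z : ℝ}

lemma contractionFactor_pos (hx : 0 ≤ x) (hy : 0 ≤ y) (hz : z < 1) :
    0 < contractionFactor x y z :=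
  div_pos (by linarith) (by positivity)

lemma contractionFactor_mul_one_add_le_one (hx : 0 ≤ x) (hy : 0 ≤ y) (hz : 0 ≤ z) :
    contractionFactor x y z * (1 + (x + y + z)) ≤ 1 := by
  rw [contractionFactor, div_mul_eq_mul_div, div_le_one (by positivity)]
  nlinarith [mul_nonneg hx hy, mul_nonneg hz (add_nonneg hx hy), mul_nonneg hz hz]

lemma log_contractionFactor (hx : 0 ≤ x) (hy : 0 ≤ y) (hz : z < 1) :
    Real.log (contractionFactor x y z) =
      Real.log (1 + -z) - (Real.log (1 + x) + Real.log (1 + y)) := by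
  rw [contractionFactor, Real.log_div (by linarith) (by positivity),
    Real.log_mul (by linarith) (by linarith), ← sub_eq_add_neg]

end ContractionFactor

lemma exists_pos_tendsto_iff_summable {F x y z : ℕ → ℝ}
    (hF : ∀ n, F (n + 1) = F n * contractionFactor (x n) (y n) (z n)) (hF0 : 0 < F 0)
    (hx : ∀ n, 0 ≤ x n) (hy : ∀ n, 0 ≤ y n) (hz : ∀ n, 0 ≤ z n) (hz1 : ∀ n, z n < 1) :
    (∃ L, 0 < L ∧ Tendsto F atTop (𝓝 L)) ↔ Summable x ∧ Summable y ∧ Summable z := by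
  have ht (n : ℕ) := contractionFactor_pos (hx n) (hy n) (hz1 n)
  constructor
  · rintro ⟨L, hL, hlim⟩
    have hsum : Summable fun n => x n + y n + z n :=
      summable_of_succ_eq_mul_of_tendsto_pos hF hF0.le (fun n => (ht n).le)
        (fun n => by linarith [hx n, hy n, hz n])
        (fun n => contractionFactor_mul_one_add_le_one (hx n) (hy n) (hz n)) hL hlim
    refine ⟨hsum.of_nonneg_of_le hx fun n => ?_, hsum.of_nonneg_of_le hy fun n => ?_,
      hsum.of_nonneg_of_le hz fun n => ?_⟩ <;> linarith [hx n, hy n, hz n]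
  · rintro ⟨hxs, hys, hzs⟩
    refine exists_pos_tendsto_of_succ_eq_mul hF hF0 ht ?_
    simp only [log_contractionFactor (hx _) (hy _) (hz1 _)]
    exact (Real.summable_log_one_add_of_summable hzs.neg).sub
      ((Real.summable_log_one_add_of_summable hxs).add (Real.summable_log_one_add_of_summable hys))

noncomputable def slopeIntervalLength (M : Matrix (Fin 2) (Fin 2) ℝ) : ℝ :=
  M 1 1 / M 0 1 - M 1 0 / M 0 0

section TwoByTwo

variable {M A : Matrix (Fin 2) (Fin 2) ℝ}

lemma slopeIntervalLength_pos (hp : 0 < M 0 0) (hq : 0 < M 0 1) (hdet : 0 < M.det) :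
    0 < slopeIntervalLength M := by
  rw [det_fin_two] at hdet
  rw [slopeIntervalLength, sub_pos, div_lt_div_iff₀ hp hq]
  linarith

lemma slopeIntervalLength_mul (hp : M 0 0 ≠ 0) (hq : M 0 1 ≠ 0) (ha : A 0 0 ≠ 0)
    (hd : A 1 1 ≠ 0) (hp' : (M * A) 0 0 ≠ 0) (hq' : (M * A) 0 1 ≠ 0) :
    slopeIntervalLength (M * A) = slopeIntervalLength M *
      contractionFactor (A 1 0 / A 0 0 * (M 0 1 / M 0 0)) (A 0 1 / A 1 1 * (M 0 1 / M 0 0)⁻¹)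
        (A 1 0 / A 0 0 * (A 0 1 / A 1 1)) := by
  simp only [slopeIntervalLength, contractionFactor, mul_apply, Fin.sum_univ_two] at hp' hq' ⊢
  have h1 : 1 + A 1 0 / A 0 0 * (M 0 1 / M 0 0) =
      (M 0 0 * A 0 0 + M 0 1 * A 1 0) / (A 0 0 * M 0 0) := by
    field_simp
  have h2 : 1 + A 0 1 / A 1 1 * (M 0 1 / M 0 0)⁻¹ =
      (M 0 0 * A 0 1 + M 0 1 * A 1 1) / (A 1 1 * M 0 1) := by
    field_simp; ring
  rw [h1, h2, div_sub_div _ _ hq' hp', div_sub_div _ _ hq hp]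
  field_simp
  ring

lemma diag_pos_of_nonneg_of_det_pos (hA : ∀ i j, 0 ≤ A i j) (hdet : 0 < A.det) :
    0 < A 0 0 ∧ 0 < A 1 1 := by
  rw [det_fin_two] at hdet
  have had : 0 < A 0 0 * A 1 1 := by nlinarith [mul_nonneg (hA 0 1) (hA 1 0)]
  exact ⟨pos_of_mul_pos_left had (hA 1 1), pos_of_mul_pos_right had (hA 0 0)⟩

lemma offDiag_ratio_mul_lt_one (hA : ∀ i j, 0 ≤ A i j) (hdet : 0 < A.det) :
    A 1 0 / A 0 0 * (A 0 1 / A 1 1) < 1 := by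
  obtain ⟨ha, hd⟩ := diag_pos_of_nonneg_of_det_pos hA hdet
  rw [det_fin_two] at hdet
  rw [div_mul_div_comm, div_lt_one (mul_pos ha hd)]
  linarith

lemma firstRow_mul_pos (hp : 0 < M 0 0) (hq : 0 < M 0 1) (hA : ∀ i j, 0 ≤ A i j)
    (hdet : 0 < A.det) : 0 < (M * A) 0 0 ∧ 0 < (M * A) 0 1 := by
  obtain ⟨ha, hd⟩ := diag_pos_of_nonneg_of_det_pos hA hdet
  have hb := hA 0 1
  have hc := hA 1 0
  simp only [mul_apply, Fin.sum_univ_two]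
  constructor <;> positivity

end TwoByTwo

/-- The limit of the slope-interval lengths `|Iₙ| = sₙ/qₙ − rₙ/pₙ` is positive if and only if
the three series `∑ (cₙ/aₙ) wₙ₋₁`, `∑ (bₙ/dₙ) wₙ₋₁⁻¹` and `∑ (cₙ/aₙ)(bₙ/dₙ)` converge. -/
theorem stmt12 (A : ℕ → Matrix (Fin 2) (Fin 2) ℝ)
    (hA : ∀ n i j, 0 ≤ A n i j) (hdet : ∀ n, 0 < (A n).det)
    (Y : ℕ → Matrix (Fin 2) (Fin 2) ℝ)
    (hY : ∀ n, Y n = ((List.range n).map (fun i => A (i + 1))).prod)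
    (hp1 : 0 < Y 1 0 0) (hq1 : 0 < Y 1 0 1) :
    (∃ L : ℝ, 0 < L ∧
        Tendsto (fun n => Y n 1 1 / Y n 0 1 - Y n 1 0 / Y n 0 0) atTop (nhds L)) ↔
      (Summable (fun n => (A (n + 2) 1 0 / A (n + 2) 0 0) * (Y (n + 1) 0 1 / Y (n + 1) 0 0)) ∧
       Summable (fun n => (A (n + 2) 0 1 / A (n + 2) 1 1) * (Y (n + 1) 0 1 / Y (n + 1) 0 0)⁻¹) ∧
       Summable (fun n => (A (n + 2) 1 0 / A (n + 2) 0 0) * (A (n + 2) 0 1 / A (n + 2) 1 1))) := by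
  have hYsucc (n : ℕ) : Y (n + 1) = Y n * A (n + 1) := by
    simp [hY, List.range_succ]
  have hrow (n : ℕ) : 0 < Y (n + 1) 0 0 ∧ 0 < Y (n + 1) 0 1 := by
    induction n with
    | zero => exact ⟨hp1, hq1⟩
    | succ n ih => rw [hYsucc (n + 1)]; exact firstRow_mul_pos ih.1 ih.2 (hA _) (hdet _)
  have hw (n : ℕ) : 0 ≤ Y (n + 1) 0 1 / Y (n + 1) 0 0 := div_nonneg (hrow n).2.le (hrow n).1.le
  have hdet1 : 0 < (Y 1).det := by simpa [hYsucc 0, hY 0] using hdet 1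
  refine (exists_congr fun L => and_congr_right fun _ => (tendsto_add_atTop_iff_nat 1).symm).trans
    (exists_pos_tendsto_iff_summable (F := fun n => slopeIntervalLength (Y (n + 1)))
      (fun n => ?_) (slopeIntervalLength_pos hp1 hq1 hdet1)
      (fun n => mul_nonneg (div_nonneg (hA _ 1 0) (hA _ 0 0)) (hw n))
      (fun n => mul_nonneg (div_nonneg (hA _ 0 1) (hA _ 1 1)) (inv_nonneg.mpr (hw n)))
      (fun n => mul_nonneg (div_nonneg (hA _ 1 0) (hA _ 0 0)) (div_nonneg (hA _ 0 1) (hA _ 1 1)))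
      (fun n => offDiag_ratio_mul_lt_one (hA _) (hdet _)))
  obtain ⟨ha, hd⟩ := diag_pos_of_nonneg_of_det_pos (hA (n + 2)) (hdet (n + 2))
  obtain ⟨hp', hq'⟩ := firstRow_mul_pos (hrow n).1 (hrow n).2 (hA (n + 2)) (hdet (n + 2))
  rw [hYsucc (n + 1)]
  exact slopeIntervalLength_mul (hrow n).1.ne' (hrow n).2.ne' ha.ne' hd.ne' hp'.ne' hq'.ne'
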